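/- The operator J commutes with every element of L^s_ℂ; equivalently, [J, L_{jk}] = 0, [J, Λ_{jk}] = 0, [J, V_j] = 0 and [J, A_j] = 0 for all indices j, k. -/

import Mathlib

/-!
The operators `E_x` and `I_x` are signed partial permutations of the monomial basis, with
`I_x` the transpose of `E_x`, and a sign count shows that they satisfy the canonical
anticommutation relations. Consequently `ad J` is a derivation rotating each pair
`(E_{1j}, E_{2j})`, and likewise `(I_{1j}, I_{2j})`, by a quarter turn:
`E_{1j} ↦ E_{2j} ↦ -E_{1j}`. The generators `L_{jk}`, `Λ_{jk}`, `V_j`, `A_j` are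
rotation-invariant quadratic expressions in these pairs, so `ad J` kills them, and the
kernel of `ad J` is a Lie subalgebra.
-/

namespace GG

attribute [local instance 100] LieRing.ofAssociativeRing

/-- Index set for the adapted coframe `v_{ij}`, `i ∈ {1,2}`, `j ∈ {0,…,s}`. -/
abbrev Idx (s : ℕ) := Fin 2 × Fin (s + 1)

/-- Linear-order encoding of the indices. -/
def enc {s : ℕ} (x : Idx s) : ℕ := x.2.1 * 2 + x.1.1

/-- The sign `(-1)^{#{a ∈ S | a < x}}` appearing in wedge/contraction with `v_x`. -/
def sgn {s : ℕ} (S : Finset (Idx s)) (x : Idx s) : ℝ :=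
  (-1 : ℝ) ^ (S.filter fun a => enc a < enc x).card

/-- The exterior algebra `⋀V` of the `2(s+1)`-dimensional real inner product space `V`,
modelled on its orthonormal basis of monomials indexed by subsets of the basis of `V`. -/
abbrev ExtV (s : ℕ) := EuclideanSpace ℝ (Finset (Idx s))

/-- Matrix of exterior multiplication by the basis vector `v_x` on basis monomials. -/
def Emat {s : ℕ} (x : Idx s) : Matrix (Finset (Idx s)) (Finset (Idx s)) ℝ :=
  Matrix.of fun T S => if x ∉ S ∧ T = insert x S then sgn S x else 0

/-- Matrix of contraction with `∂/∂v_x` on basis monomials. -/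
def Imat {s : ℕ} (x : Idx s) : Matrix (Finset (Idx s)) (Finset (Idx s)) ℝ :=
  Matrix.of fun T S => if x ∈ S ∧ T = S.erase x then sgn S x else 0

/-- The wedge operator `E_{ij}` on `⋀V`. -/
noncomputable def Eop {s : ℕ} (x : Idx s) : Module.End ℝ (ExtV s) :=
  Matrix.toEuclideanLin (Emat x)

/-- The contraction operator `I_{ij}` on `⋀V`. -/
noncomputable def Iop {s : ℕ} (x : Idx s) : Module.End ℝ (ExtV s) :=
  Matrix.toEuclideanLin (Imat x)

/-- The complexification `⋀_ℂ V` of `⋀V`. -/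
abbrev ExtVC (s : ℕ) := EuclideanSpace ℂ (Finset (Idx s))

/-- The ℂ-linear extension of the wedge operator `E_{ij}`. -/
noncomputable def EopC {s : ℕ} (x : Idx s) : Module.End ℂ (ExtVC s) :=
  Matrix.toEuclideanLin ((Emat x).map Complex.ofReal)

/-- The ℂ-linear extension of the contraction operator `I_{ij}`. -/
noncomputable def IopC {s : ℕ} (x : Idx s) : Module.End ℂ (ExtVC s) :=
  Matrix.toEuclideanLin ((Imat x).map Complex.ofReal)

/-- `L_{jk} = Σ_i E_{ij}∘E_{ik}` on `⋀_ℂ V`. -/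
noncomputable def LCop {s : ℕ} (j k : Fin (s + 1)) : Module.End ℂ (ExtVC s) :=
  ∑ i : Fin 2, EopC (i, j) * EopC (i, k)

/-- `Λ_{jk} = Σ_i I_{ik}∘I_{ij}` on `⋀_ℂ V`. -/
noncomputable def LamC {s : ℕ} (j k : Fin (s + 1)) : Module.End ℂ (ExtVC s) :=
  ∑ i : Fin 2, IopC (i, k) * IopC (i, j)

/-- `V_j = E_{1j}∘E_{2j}` on `⋀_ℂ V`. -/
noncomputable def VopC {s : ℕ} (j : Fin (s + 1)) : Module.End ℂ (ExtVC s) :=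
  EopC (0, j) * EopC (1, j)

/-- `A_j = I_{2j}∘I_{1j}` on `⋀_ℂ V`. -/
noncomputable def AopC {s : ℕ} (j : Fin (s + 1)) : Module.End ℂ (ExtVC s) :=
  IopC (1, j) * IopC (0, j)

/-- `J = Σ_j (E_{2j}∘I_{1j} − E_{1j}∘I_{2j})` on `⋀_ℂ V`. -/
noncomputable def JC (s : ℕ) : Module.End ℂ (ExtVC s) :=
  ∑ j : Fin (s + 1), (EopC (1, j) * IopC (0, j) - EopC (0, j) * IopC (1, j))

/-- The generators `{L_{jk}, Λ_{jk}, V_j, A_j}` of `L^s_ℂ`. -/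
def gensC (s : ℕ) : Set (Module.End ℂ (ExtVC s)) :=
  {f | (∃ j k : Fin (s + 1), f = LCop j k ∨ f = LamC j k) ∨
    (∃ j : Fin (s + 1), f = VopC j ∨ f = AopC j)}

/-- The complex Lie algebra `L^s_ℂ ⊆ End_ℂ(⋀_ℂ V)`. -/
noncomputable def LsC (s : ℕ) : LieSubalgebra ℂ (Module.End ℂ (ExtVC s)) :=
  LieSubalgebra.lieSpan ℂ _ (gensC s)

section Sign

variable {s : ℕ}

lemma enc_injective : Function.Injective (enc (s := s)) := by
  rintro ⟨i, j⟩ ⟨i', j'⟩ h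
  have := i.isLt; have := i'.isLt
  simp only [enc] at h
  ext <;> simp only <;> omega

lemma sgn_union {S T : Finset (Idx s)} (h : Disjoint S T) (x : Idx s) :
    sgn (S ∪ T) x = sgn S x * sgn T x := by
  rw [sgn, sgn, sgn, Finset.filter_union, Finset.card_union_of_disjoint
    (Finset.disjoint_filter_filter h), pow_add]

lemma sgn_insert {S : Finset (Idx s)} {y : Idx s} (hy : y ∉ S) (x : Idx s) :
    sgn (insert y S) x = sgn {y} x * sgn S x := by
  rw [Finset.insert_eq, sgn_union (Finset.disjoint_singleton_left.mpr hy)]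

lemma sgn_of_mem {S : Finset (Idx s)} {y : Idx s} (hy : y ∈ S) (x : Idx s) :
    sgn S x = sgn {y} x * sgn (S.erase y) x := by
  conv_lhs => rw [← Finset.insert_erase hy]
  exact sgn_insert (Finset.notMem_erase y S) x

lemma sgn_singleton (x y : Idx s) : sgn {y} x = if enc y < enc x then -1 else 1 := by
  split_ifs with h <;> simp [sgn, Finset.filter_singleton, h]

lemma sgn_singleton_self (x : Idx s) : sgn {x} x = 1 := by
  simp [sgn_singleton]

lemma sgn_mul_self (S : Finset (Idx s)) (x : Idx s) : sgn S x * sgn S x = 1 := by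
  rw [sgn, ← pow_add, Even.neg_one_pow ⟨_, rfl⟩]

lemma sgn_singleton_add_swap {x y : Idx s} (hxy : x ≠ y) : sgn {y} x + sgn {x} y = 0 := by
  rcases lt_or_gt_of_ne (enc_injective.ne hxy) with h | h <;>
    simp [sgn_singleton, h, h.not_gt]

lemma sgn_singleton_mul_swap {x y : Idx s} (hxy : x ≠ y) : sgn {y} x * sgn {x} y = -1 := by
  rw [eq_neg_of_add_eq_zero_right (sgn_singleton_add_swap hxy), mul_neg, sgn_mul_self]

end Sign

lemma _root_.Matrix.of_ite_mul_of_ite {n R : Type*} [Fintype n] [DecidableEq n]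
    [NonUnitalNonAssocSemiring R] (p q : n → Prop) [DecidablePred p] [DecidablePred q]
    (f g : n → n) (a b : n → R) :
    (Matrix.of fun T S => if p S ∧ T = f S then a S else 0) *
      (Matrix.of fun T S => if q S ∧ T = g S then b S else 0) =
    Matrix.of fun T S => if q S ∧ p (g S) ∧ T = f (g S) then a (g S) * b S else 0 := by
  ext T S
  rw [Matrix.mul_apply, Finset.sum_eq_single (g S) (fun U _ hU => by simp [hU]) (by simp)]
  by_cases hq : q S <;> by_cases hp : p (g S) <;> simp [hp, hq]

section CAR

variable {s : ℕ}

open Matrix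

lemma Imat_eq_transpose (x : Idx s) : Imat x = (Emat x)ᵀ := by
  ext T S
  simp only [Imat, Emat, transpose_apply, of_apply]
  by_cases hx : x ∈ S
  · by_cases hT : T = S.erase x
    · subst hT
      rw [if_pos ⟨hx, rfl⟩, if_pos ⟨Finset.notMem_erase x S, (Finset.insert_erase hx).symm⟩,
        sgn_of_mem hx, sgn_singleton_self, one_mul]
    · rw [if_neg (fun h => hT h.2), if_neg]
      rintro ⟨hxT, rfl⟩
      exact hT (Finset.erase_insert hxT).symm
  · rw [if_neg (fun h => hx h.1), if_neg]
    rintro ⟨-, rfl⟩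
    exact hx (Finset.mem_insert_self x T)

lemma Emat_mul_self (x : Idx s) : Emat x * Emat x = 0 := by
  ext T S
  simp [Emat, of_ite_mul_of_ite]

lemma Emat_mul_add_mul_swap (x y : Idx s) : Emat x * Emat y + Emat y * Emat x = 0 := by
  rcases eq_or_ne x y with rfl | hxy
  · rw [Emat_mul_self, add_zero]
  ext T S
  simp only [Emat, of_ite_mul_of_ite, Matrix.add_apply, of_apply, Matrix.zero_apply,
    Finset.mem_insert, hxy, hxy.symm, false_or, Finset.insert_comm y x S,
    and_left_comm (a := x ∉ S)]
  split_ifs with h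
  · rw [sgn_insert h.1, sgn_insert h.2.1]
    linear_combination (sgn S x * sgn S y) * sgn_singleton_add_swap hxy
  · rw [add_zero]

lemma Imat_mul_add_mul_swap (x y : Idx s) : Imat x * Imat y + Imat y * Imat x = 0 := by
  rw [Imat_eq_transpose, Imat_eq_transpose, ← transpose_mul, ← transpose_mul,
    ← transpose_add, add_comm, Emat_mul_add_mul_swap, transpose_zero]

lemma Emat_mul_Imat_add_mul (x y : Idx s) :
    Emat x * Imat y + Imat y * Emat x = if x = y then 1 else 0 := by
  rcases eq_or_ne x y with rfl | hxy
  · rw [if_pos rfl]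
    ext T S
    simp only [Emat, Imat, of_ite_mul_of_ite, Matrix.add_apply, of_apply, Matrix.one_apply]
    by_cases hx : x ∈ S
    · simp [hx, Finset.insert_erase hx, sgn_of_mem hx x, sgn_singleton_self, sgn_mul_self]
    · simp [hx, sgn_insert hx, sgn_singleton_self, sgn_mul_self]
  · rw [if_neg hxy]
    ext T S
    simp only [Emat, Imat, of_ite_mul_of_ite, Matrix.add_apply, of_apply, Matrix.zero_apply,
      Finset.mem_erase, Finset.mem_insert, ne_eq, hxy, hxy.symm, not_false_eq_true, true_and,
      false_or, Finset.erase_insert_of_ne hxy, and_left_comm (a := x ∉ S)]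
    split_ifs with h
    · rw [sgn_insert h.2.1 y, sgn_of_mem h.1 x]
      linear_combination (sgn (S.erase y) x * sgn S y) * sgn_singleton_mul_swap hxy
    · rw [add_zero]

end CAR

noncomputable def complexify {n : Type*} [Fintype n] [DecidableEq n] :
    Matrix n n ℝ →+* Module.End ℂ (EuclideanSpace ℂ n) :=
  ContinuousLinearMap.toLinearMapRingHom.comp
    ((Matrix.toEuclideanCLM (n := n) (𝕜 := ℂ)).toRingEquiv.toRingHom.comp
      Complex.ofRealHom.mapMatrix)

section Operators

variable {s : ℕ}

lemma EopC_eq_complexify (x : Idx s) : EopC x = complexify (Emat x) := rfl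

lemma IopC_eq_complexify (x : Idx s) : IopC x = complexify (Imat x) := rfl

lemma EopC_mul_self (x : Idx s) : EopC x * EopC x = 0 := by
  rw [EopC_eq_complexify, ← map_mul, Emat_mul_self, map_zero]

lemma IopC_mul_self (x : Idx s) : IopC x * IopC x = 0 := by
  rw [IopC_eq_complexify, ← map_mul, Imat_eq_transpose, ← Matrix.transpose_mul, Emat_mul_self,
    Matrix.transpose_zero, map_zero]

lemma EopC_mul_swap (x y : Idx s) : EopC y * EopC x = -(EopC x * EopC y) := by
  refine (neg_eq_of_add_eq_zero_right ?_).symm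
  rw [EopC_eq_complexify, EopC_eq_complexify, ← map_mul, ← map_mul, ← map_add,
    Emat_mul_add_mul_swap, map_zero]

lemma IopC_mul_swap (x y : Idx s) : IopC y * IopC x = -(IopC x * IopC y) := by
  refine (neg_eq_of_add_eq_zero_right ?_).symm
  rw [IopC_eq_complexify, IopC_eq_complexify, ← map_mul, ← map_mul, ← map_add,
    Imat_mul_add_mul_swap, map_zero]

lemma IopC_mul_EopC (x y : Idx s) :
    IopC y * EopC x = (if x = y then 1 else 0) - EopC x * IopC y := by
  refine eq_sub_of_add_eq' ?_
  rw [EopC_eq_complexify, IopC_eq_complexify, ← map_mul, ← map_mul, ← map_add,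
    Emat_mul_Imat_add_mul, apply_ite complexify, map_one, map_zero]

end Operators

lemma lie_mul_right {R : Type*} [Ring R] (x a b : R) : ⁅x, a * b⁆ = ⁅x, a⁆ * b + a * ⁅x, b⁆ := by
  simp only [Ring.lie_def]
  noncomm_ring

lemma lie_eq_zero_of_mem_lieSpan {R L : Type*} [CommRing R] [LieRing L] [LieAlgebra R L]
    {x : L} {S : Set L} (h : ∀ g ∈ S, ⁅x, g⁆ = 0) {y : L}
    (hy : y ∈ LieSubalgebra.lieSpan R L S) : ⁅x, y⁆ = 0 := by
  induction hy using LieSubalgebra.lieSpan_induction with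
  | mem g hg => exact h g hg
  | zero => exact lie_zero x
  | add a b _ _ ha hb => rw [lie_add, ha, hb, add_zero]
  | smul c a _ ha => rw [lie_smul, ha, smul_zero]
  | lie a b _ _ ha hb => rw [leibniz_lie, ha, hb, zero_lie, lie_zero, add_zero]

section Rotation

variable {s : ℕ}

lemma lie_EopC_mul_IopC_EopC (a b c : Idx s) :
    ⁅EopC a * IopC b, EopC c⁆ = if b = c then EopC a else 0 := by
  rw [Ring.lie_def, mul_assoc, IopC_mul_EopC c b, mul_sub, ← mul_assoc (EopC c),
    EopC_mul_swap a c, neg_mul, mul_assoc, sub_neg_eq_add, sub_add_cancel, mul_ite, mul_one,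
    mul_zero]
  simp only [eq_comm]

lemma lie_EopC_mul_IopC_IopC (a b c : Idx s) :
    ⁅EopC a * IopC b, IopC c⁆ = -(if a = c then IopC b else 0) := by
  rw [Ring.lie_def, ← mul_assoc, IopC_mul_EopC a c, sub_mul, mul_assoc, mul_assoc,
    IopC_mul_swap b c, mul_neg, ite_mul, one_mul, zero_mul]
  abel

lemma lie_JC_EopC_zero (j : Fin (s + 1)) : ⁅JC s, EopC (0, j)⁆ = EopC (1, j) := by
  simp only [JC, sum_lie, sub_lie, lie_EopC_mul_IopC_EopC, Prod.mk.injEq]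
  norm_num

lemma lie_JC_EopC_one (j : Fin (s + 1)) : ⁅JC s, EopC (1, j)⁆ = -EopC (0, j) := by
  simp only [JC, sum_lie, sub_lie, lie_EopC_mul_IopC_EopC, Prod.mk.injEq]
  norm_num

lemma lie_JC_IopC_zero (j : Fin (s + 1)) : ⁅JC s, IopC (0, j)⁆ = IopC (1, j) := by
  simp only [JC, sum_lie, sub_lie, lie_EopC_mul_IopC_IopC, Prod.mk.injEq]
  norm_num

lemma lie_JC_IopC_one (j : Fin (s + 1)) : ⁅JC s, IopC (1, j)⁆ = -IopC (0, j) := by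
  simp only [JC, sum_lie, sub_lie, lie_EopC_mul_IopC_IopC, Prod.mk.injEq]
  norm_num

lemma lie_JC_LCop (j k : Fin (s + 1)) : ⁅JC s, LCop (s := s) j k⁆ = 0 := by
  rw [LCop, Fin.sum_univ_two, lie_add, lie_mul_right, lie_mul_right, lie_JC_EopC_zero,
    lie_JC_EopC_zero, lie_JC_EopC_one, lie_JC_EopC_one]
  noncomm_ring

lemma lie_JC_LamC (j k : Fin (s + 1)) : ⁅JC s, LamC (s := s) j k⁆ = 0 := by
  rw [LamC, Fin.sum_univ_two, lie_add, lie_mul_right, lie_mul_right, lie_JC_IopC_zero,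
    lie_JC_IopC_zero, lie_JC_IopC_one, lie_JC_IopC_one]
  noncomm_ring

lemma lie_JC_VopC (j : Fin (s + 1)) : ⁅JC s, VopC (s := s) j⁆ = 0 := by
  rw [VopC, lie_mul_right, lie_JC_EopC_zero, lie_JC_EopC_one, mul_neg, EopC_mul_self,
    EopC_mul_self, neg_zero, add_zero]

lemma lie_JC_AopC (j : Fin (s + 1)) : ⁅JC s, AopC (s := s) j⁆ = 0 := by
  rw [AopC, lie_mul_right, lie_JC_IopC_zero, lie_JC_IopC_one, neg_mul, IopC_mul_self,
    IopC_mul_self, neg_zero, zero_add]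

end Rotation

theorem statement_8_general (s : ℕ) :
    (∀ f ∈ LsC s, ⁅JC s, f⁆ = 0) ∧
    (∀ j k : Fin (s + 1), ⁅JC s, LCop (s := s) j k⁆ = 0 ∧ ⁅JC s, LamC (s := s) j k⁆ = 0) ∧
    (∀ j : Fin (s + 1), ⁅JC s, VopC (s := s) j⁆ = 0 ∧ ⁅JC s, AopC (s := s) j⁆ = 0) := by
  refine ⟨fun f hf => lie_eq_zero_of_mem_lieSpan ?_ hf,
    fun j k => ⟨lie_JC_LCop j k, lie_JC_LamC j k⟩, fun j => ⟨lie_JC_VopC j, lie_JC_AopC j⟩⟩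
  rintro g (⟨j, k, rfl | rfl⟩ | ⟨j, rfl | rfl⟩)
  exacts [lie_JC_LCop j k, lie_JC_LamC j k, lie_JC_VopC j, lie_JC_AopC j]

theorem statement_8 (s : ℕ) (hs : 2 ≤ s) :
    (∀ f ∈ LsC s, ⁅JC s, f⁆ = 0) ∧
    (∀ j k : Fin (s + 1), ⁅JC s, LCop (s := s) j k⁆ = 0 ∧ ⁅JC s, LamC (s := s) j k⁆ = 0) ∧
    (∀ j : Fin (s + 1), ⁅JC s, VopC (s := s) j⁆ = 0 ∧ ⁅JC s, AopC (s := s) j⁆ = 0) :=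
  statement_8_general s

end GG
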